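/- arXiv:1409.6434 — 3 statements merged into one kernel-verified Lean document; each statement's English description precedes it below -/
import Mathlib

section
/- Let F∗A be a twisted group algebra of a finitely generated free abelian group A over a field F. Then F∗A has center exactly F if and only if for every subgroup A₁ ≤ A of finite index, the twisted group algebra F∗A₁ (the F-span of {ā : a ∈ A₁} in F∗A) has center exactly F. -/
open MulOpposite

universe u v

/-- `KdimLT R k M` means the (Gabriel–Rentschler) Krull dimension of the `R`-module `M`
is `< k` (i.e. `≤ k - 1`), where `KdimLT R 0 M` means `M = 0`. -/
def KdimLT (R : Type u) [Ring R] : ℕ → ModuleCat.{u} R → Prop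
  | 0, M => Subsingleton M
  | k+1, M => ∀ f : ℕ → Submodule R M, Antitone f → ∃ N, ∀ i ≥ N,
      KdimLT R k (ModuleCat.of R (↥(f i) ⧸ Submodule.comap (f i).subtype (f (i+1))))

/-- `IsKrullDim R d` : the ring `R` has (Gabriel–Rentschler) Krull dimension exactly `d`. -/
def IsKrullDim (R : Type u) [Ring R] (d : ℕ) : Prop :=
  KdimLT R (d + 1) (ModuleCat.of R R) ∧ ∀ d' : ℕ, KdimLT R (d' + 1) (ModuleCat.of R R) → d ≤ d'

/-- `PdimLE R k M` : the projective dimension of `M` is at most `k`.  (By Schanuel's lemma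
this recursive definition, which uses the canonical free cover at every stage, agrees with
the usual definition of projective dimension.) -/
def PdimLE (R : Type u) [Ring R] : ℕ → ModuleCat.{u} R → Prop
  | 0, M => Module.Projective R M
  | k+1, M => PdimLE R k
      (ModuleCat.of R (LinearMap.ker (Finsupp.linearCombination R (id : M → M))))

/-- `IsGlobalDim R d` : the ring `R` has global dimension exactly `d`. -/
def IsGlobalDim (R : Type u) [Ring R] (d : ℕ) : Prop :=
  (∀ M : ModuleCat.{u} R, PdimLE R d M) ∧
    ∀ d' : ℕ, (∀ M : ModuleCat.{u} R, PdimLE R d' M) → d ≤ d'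

/-- By a theorem of McConnell and Pettit the Krull dimension and the global dimension of a
quantum torus (twisted group algebra of a f.g. free abelian group) coincide;
`IsDimension R d` says that `d` is this common value `dim R`. -/
def IsDimension (R : Type u) [Ring R] (d : ℕ) : Prop :=
  IsKrullDim R d ∧ IsGlobalDim R d

/-- `IsTwistedGroupAlgebra F R bar τ` : the `F`-algebra `R` is a twisted group algebra
`F∗A` of the free abelian group `A = ℤⁿ` over the field `F`: the units `bar a` (`a ∈ A`)
form an `F`-basis of `R` and multiply according to the 2-cocycle `τ` with values in
`F∖{0}`. -/
structure IsTwistedGroupAlgebra (F : Type u) [Field F] {n : ℕ} (R : Type v) [Ring R]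
    [Algebra F R] (bar : (Fin n → ℤ) → Rˣ) (τ : (Fin n → ℤ) → (Fin n → ℤ) → F) : Prop where
  τ_ne_zero : ∀ a b, τ a b ≠ 0
  cocycle : ∀ a b c, τ a b * τ (a + b) c = τ b c * τ a (b + c)
  mul_bar : ∀ a b, (bar a : R) * bar b = τ a b • (bar (a + b) : R)
  repr_unique : ∀ r : R, ∃! c : (Fin n → ℤ) →₀ F, r = c.sum fun a f => f • (bar a : R)
/-- The `F`-span of `{bar b : b ∈ B}` in `R`; for a subgroup `B ≤ A` this is the
twisted group algebra `F∗B` sitting inside `F∗A`. -/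
def tgaSpan (F : Type u) [Field F] {n : ℕ} {R : Type v} [Ring R] [Algebra F R]
    (bar : (Fin n → ℤ) → Rˣ) (B : AddSubgroup (Fin n → ℤ)) : Submodule F R :=
  Submodule.span F ((fun a => (bar a : R)) '' B)

/-- A right `R`-module `M` is `F∗B`-torsion if every element of `M` is annihilated by a
nonzero element of `F∗B`. -/
def IsTorsionOverSub (F : Type u) [Field F] {n : ℕ} {R : Type v} [Ring R] [Algebra F R]
    (bar : (Fin n → ℤ) → Rˣ) (B : AddSubgroup (Fin n → ℤ)) (M : Type*) [AddCommGroup M]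
    [Module Rᵐᵒᵖ M] : Prop :=
  ∀ m : M, ∃ β ∈ tgaSpan F bar B, β ≠ 0 ∧ op β • m = 0

/-- The rank of a subgroup of the free abelian group `ℤⁿ`. -/
noncomputable def rk {n : ℕ} (B : AddSubgroup (Fin n → ℤ)) : ℕ :=
  Module.finrank ℤ B

/-- The Gelfand–Kirillov dimension (measured over `F`) of a finitely generated right module
over the twisted group algebra `F∗A`, via the Brookes–Groves characterization: it is the
supremum of the ranks of the subgroups `B ≤ A` such that `M` is not `F∗B`-torsion. -/
noncomputable def gkTGA (F : Type u) [Field F] {n : ℕ} {R : Type v} [Ring R] [Algebra F R]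
    (bar : (Fin n → ℤ) → Rˣ) (M : Type*) [AddCommGroup M] [Module Rᵐᵒᵖ M] : ℕ :=
  sSup { r : ℕ | ∃ B : AddSubgroup (Fin n → ℤ),
    ¬ IsTorsionOverSub F bar B M ∧ rk B = r }

/-- The subgroup `⟨x₁, …, x_r⟩` of `ℤⁿ` generated by the first `r` standard basis
vectors. -/
def stdSub (n r : ℕ) : AddSubgroup (Fin n → ℤ) where
  carrier := { x | ∀ i : Fin n, r ≤ (i : ℕ) → x i = 0 }
  zero_mem' := fun i _ => rfl
  add_mem' := by
    intro a b ha hb i hi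
    simp [ha i hi, hb i hi]
  neg_mem' := by
    intro a ha i hi
    simp [ha i hi]

/-!
The `ā` form an `F`-basis of `F∗A`, and comparing the coefficients of `z b̄` and `b̄ z` at
`a + b` shows that if `z` commutes with `b̄` then `τ(a, b) = τ(b, a)` for every `a` in the
support of `z`. By the cocycle identity, `λ(a, b) = τ(a, b) / τ(b, a)` is a bicharacter.
If `A₁` has index `m` then `mA ⊆ A₁`, so for `a` in the support of a central element of `F∗A₁`
we get `λ(ma, w) = λ(a, mw) = 1` for all `w`, i.e. `(ma)‾` is central in `F∗A`. When that center
is `F = F·0̄` this forces `ma = 0`, hence `a = 0` as `A` is torsion-free.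
-/

open Module

namespace IsTwistedGroupAlgebra

variable {F : Type u} [Field F] {n : ℕ} {R : Type v} [Ring R] [Algebra F R]
  {bar : (Fin n → ℤ) → Rˣ} {τ : (Fin n → ℤ) → (Fin n → ℤ) → F}

variable (τ) in
def commutatorChar (a b : Fin n → ℤ) : F :=
  τ a b / τ b a

variable (h : IsTwistedGroupAlgebra F R bar τ)
include h

noncomputable def basis : Basis (Fin n → ℤ) F R :=
  Basis.mk (v := fun a => (bar a : R))
    (linearIndependent_iff.2 fun l hl => by
      obtain ⟨c, -, hc⟩ := h.repr_unique 0
      rw [Finsupp.linearCombination_apply] at hl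
      exact (hc l hl.symm).trans (hc 0 (by simp)).symm)
    (fun r _ => by
      obtain ⟨c, hc, -⟩ := h.repr_unique r
      exact Finsupp.mem_span_range_iff_exists_finsupp.2 ⟨c, hc.symm⟩)

@[simp]
theorem coe_basis : ⇑h.basis = fun a => (bar a : R) :=
  Basis.coe_mk _ _

@[simp]
theorem repr_bar (a : Fin n → ℤ) : h.basis.repr (bar a) = Finsupp.single a 1 := by
  simpa using h.basis.repr_self a

theorem mem_tgaSpan_iff {B : AddSubgroup (Fin n → ℤ)} {r : R} :
    r ∈ tgaSpan F bar B ↔ ↑(h.basis.repr r).support ⊆ (B : Set (Fin n → ℤ)) := by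
  rw [tgaSpan, ← h.coe_basis, Basis.mem_span_image]

theorem tgaSpan_top : tgaSpan F bar (⊤ : AddSubgroup (Fin n → ℤ)) = ⊤ := by
  rw [tgaSpan, AddSubgroup.coe_top, Set.image_univ, ← h.coe_basis, h.basis.span_eq]

theorem bar_zero : (bar 0 : R) = τ 0 0 • 1 := by
  rw [← (bar 0).mul_left_inj, h.mul_bar, add_zero, smul_mul_assoc, one_mul]

theorem range_algebraMap_eq_tgaSpan_bot :
    Set.range (algebraMap F R) = tgaSpan F bar (⊥ : AddSubgroup (Fin n → ℤ)) := by
  ext r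
  rw [tgaSpan, AddSubgroup.coe_bot, Set.image_singleton, SetLike.mem_coe,
    Submodule.mem_span_singleton, h.bar_zero]
  constructor
  · rintro ⟨μ, rfl⟩
    refine ⟨μ / τ 0 0, ?_⟩
    rw [smul_smul, div_mul_cancel₀ _ (h.τ_ne_zero 0 0), Algebra.algebraMap_eq_smul_one]
  · rintro ⟨μ, rfl⟩
    exact ⟨μ * τ 0 0, by rw [smul_smul, Algebra.algebraMap_eq_smul_one]⟩

theorem range_algebraMap_subset_tgaSpan (B : AddSubgroup (Fin n → ℤ)) :
    Set.range (algebraMap F R) ⊆ tgaSpan F bar B := by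
  rw [h.range_algebraMap_eq_tgaSpan_bot]
  exact Submodule.span_mono (Set.image_mono (SetLike.coe_subset_coe.2 bot_le))

theorem repr_mul_bar (r : R) (a b : Fin n → ℤ) :
    h.basis.repr (r * bar b) (a + b) = h.basis.repr r a * τ a b := by
  have key := h.basis.ext
    (f₁ := Finsupp.lapply (a + b) ∘ₗ h.basis.repr.toLinearMap ∘ₗ LinearMap.mulRight F (bar b : R))
    (f₂ := τ a b • (Finsupp.lapply a ∘ₗ h.basis.repr.toLinearMap)) fun x => by
      by_cases hx : x = a <;> simp [h.mul_bar, hx]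
  simpa [mul_comm] using LinearMap.congr_fun key r

theorem repr_bar_mul (r : R) (a b : Fin n → ℤ) :
    h.basis.repr (bar b * r) (a + b) = τ b a * h.basis.repr r a := by
  have key := h.basis.ext
    (f₁ := Finsupp.lapply (a + b) ∘ₗ h.basis.repr.toLinearMap ∘ₗ LinearMap.mulLeft F (bar b : R))
    (f₂ := τ b a • (Finsupp.lapply a ∘ₗ h.basis.repr.toLinearMap)) fun x => by
      by_cases hx : x = a <;> simp [h.mul_bar, hx, add_comm b]
  simpa using LinearMap.congr_fun key r

theorem τ_comm_of_commute_bar {z : R} {b : Fin n → ℤ} (hz : Commute z (bar b))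
    {a : Fin n → ℤ} (ha : h.basis.repr z a ≠ 0) : τ a b = τ b a := by
  have := congrArg (fun r => h.basis.repr r (a + b)) hz.eq
  simp only [h.repr_mul_bar, h.repr_bar_mul, mul_comm (τ b a)] at this
  exact mul_left_cancel₀ ha this

theorem commute_bar_of_τ_comm {a : Fin n → ℤ} (ha : ∀ w, τ a w = τ w a) (r : R) :
    Commute (bar a : R) r := by
  have key := h.basis.ext (f₁ := LinearMap.mulLeft F (bar a : R))
    (f₂ := LinearMap.mulRight F (bar a : R)) fun w => by
      simp [h.mul_bar, ha w, add_comm a]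
  exact LinearMap.congr_fun key r

theorem commutatorChar_eq_one_iff {a b : Fin n → ℤ} :
    commutatorChar τ a b = 1 ↔ τ a b = τ b a :=
  div_eq_one_iff_eq (h.τ_ne_zero b a)

theorem commutatorChar_add_left (a b c : Fin n → ℤ) :
    commutatorChar τ (a + b) c = commutatorChar τ a c * commutatorChar τ b c := by
  have h₁ := h.cocycle a b c
  have h₂ := h.cocycle a c b
  have h₃ := h.cocycle c a b
  rw [add_comm c b] at h₂
  rw [add_comm c a] at h₃
  rw [commutatorChar, commutatorChar, commutatorChar, div_mul_div_comm,
    div_eq_div_iff (h.τ_ne_zero _ _) (mul_ne_zero (h.τ_ne_zero _ _) (h.τ_ne_zero _ _))]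
  apply mul_left_cancel₀ (h.τ_ne_zero a b)
  linear_combination τ c a * τ c b * h₁ - τ b c * τ c a * h₂ + τ a c * τ b c * h₃

theorem commutatorChar_add_right (a b c : Fin n → ℤ) :
    commutatorChar τ a (b + c) = commutatorChar τ a b * commutatorChar τ a c := by
  have h₁ := h.cocycle b c a
  have h₂ := h.cocycle b a c
  have h₃ := h.cocycle a b c
  rw [add_comm c a] at h₁
  rw [add_comm b a] at h₂
  rw [commutatorChar, commutatorChar, commutatorChar, div_mul_div_comm,
    div_eq_div_iff (h.τ_ne_zero _ _) (mul_ne_zero (h.τ_ne_zero _ _) (h.τ_ne_zero _ _))]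
  apply mul_left_cancel₀ (h.τ_ne_zero b c)
  linear_combination τ c a * τ a b * h₂ - τ b a * τ c a * h₃ - τ a b * τ a c * h₁

theorem commutatorChar_ne_zero (a b : Fin n → ℤ) : commutatorChar τ a b ≠ 0 :=
  div_ne_zero (h.τ_ne_zero a b) (h.τ_ne_zero b a)

theorem commutatorChar_nsmul_left (m : ℕ) (a c : Fin n → ℤ) :
    commutatorChar τ (m • a) c = commutatorChar τ a c ^ m := by
  induction m with
  | zero =>
    have h₀ := h.commutatorChar_add_left 0 0 c
    rw [add_zero, eq_comm, mul_eq_left₀ (h.commutatorChar_ne_zero 0 c)] at h₀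
    rw [zero_smul, pow_zero, h₀]
  | succ k ih => rw [succ_nsmul, h.commutatorChar_add_left, ih, pow_succ]

theorem commutatorChar_nsmul_right (m : ℕ) (a c : Fin n → ℤ) :
    commutatorChar τ a (m • c) = commutatorChar τ a c ^ m := by
  induction m with
  | zero =>
    have h₀ := h.commutatorChar_add_right a 0 0
    rw [add_zero, eq_comm, mul_eq_left₀ (h.commutatorChar_ne_zero a 0)] at h₀
    rw [zero_smul, pow_zero, h₀]
  | succ k ih => rw [succ_nsmul, h.commutatorChar_add_right, ih, pow_succ]

theorem commute_bar_index_nsmul {B : AddSubgroup (Fin n → ℤ)} {a : Fin n → ℤ}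
    (ha : ∀ b ∈ B, τ a b = τ b a) (r : R) : Commute (bar (B.index • a) : R) r := by
  refine h.commute_bar_of_τ_comm (fun w => ?_) r
  rw [← h.commutatorChar_eq_one_iff, h.commutatorChar_nsmul_left,
    ← h.commutatorChar_nsmul_right, h.commutatorChar_eq_one_iff]
  exact ha _ (B.nsmul_index_mem w)

theorem eq_zero_of_bar_mem_range_algebraMap {a : Fin n → ℤ}
    (ha : (bar a : R) ∈ Set.range (algebraMap F R)) : a = 0 := by
  rw [h.range_algebraMap_eq_tgaSpan_bot, SetLike.mem_coe, h.mem_tgaSpan_iff, h.repr_bar] at ha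
  simpa using ha

theorem eq_zero_of_commute_of_repr_ne_zero
    (hcenter : ∀ z : R, (∀ w, Commute z w) → z ∈ Set.range (algebraMap F R))
    {B : AddSubgroup (Fin n → ℤ)} (hB : B.index ≠ 0) {z : R} (hz : ∀ b ∈ B, Commute z (bar b))
    {a : Fin n → ℤ} (ha : h.basis.repr z a ≠ 0) : a = 0 := by
  have hcentral := hcenter _ <| h.commute_bar_index_nsmul fun b hb =>
    h.τ_comm_of_commute_bar (hz b hb) ha
  exact (nsmul_eq_zero_iff_right hB).1 (h.eq_zero_of_bar_mem_range_algebraMap hcentral)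

end IsTwistedGroupAlgebra

/-- **Proposition.** A twisted group algebra `F∗A` has center exactly `F` if and only if
for every subgroup `A₁ ≤ A` of finite index the twisted group algebra `F∗A₁`
(the `F`-span of `{ā : a ∈ A₁}` in `F∗A`) has center exactly `F`. -/
theorem center_eq_F_iff_finiteIndex_center_eq_F {F : Type u} [Field F] {n : ℕ}
    {R : Type u} [Ring R] [Algebra F R]
    {bar : (Fin n → ℤ) → Rˣ} {τ : (Fin n → ℤ) → (Fin n → ℤ) → F}
    (h : IsTwistedGroupAlgebra F R bar τ) :
    ({z : R | ∀ w : R, z * w = w * z} = Set.range (algebraMap F R)) ↔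
      ∀ A₁ : AddSubgroup (Fin n → ℤ), A₁.index ≠ 0 →
        ({z ∈ (tgaSpan F bar A₁ : Set R) |
            ∀ w ∈ (tgaSpan F bar A₁ : Set R), z * w = w * z}
          = Set.range (algebraMap F R)) := by
  constructor
  · intro hcenter A₁ hA₁
    refine subset_antisymm ?_ ?_
    · rintro z ⟨-, hz⟩
      rw [h.range_algebraMap_eq_tgaSpan_bot, SetLike.mem_coe, h.mem_tgaSpan_iff]
      intro a ha
      exact h.eq_zero_of_commute_of_repr_ne_zero (fun z hz => hcenter.subset hz) hA₁
        (fun b hb => hz _ (Submodule.subset_span ⟨b, hb, rfl⟩)) (Finsupp.mem_support_iff.1 ha)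
    · rintro _ ⟨μ, rfl⟩
      exact ⟨h.range_algebraMap_subset_tgaSpan A₁ ⟨μ, rfl⟩, fun w _ => Algebra.commutes μ w⟩
  · intro hall
    simpa [h.tgaSpan_top] using hall ⊤ (by simp)
end

section
/- Let M be a finitely generated right module over a crossed product D∗A of a finitely generated free abelian group A over a division ring D, with gk(M) = r where 0 ≤ r ≤ rk(A). If A' < A is a subgroup of finite index and M' denotes M regarded as a D∗A'-module, then gk(M') = r. -/
open MulOpposite

universe u v

/-- `IsCrossedProduct D R ι bar σ τ` : the ring `R` is a crossed product `D∗A` of the free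
abelian group `A = ℤⁿ` over the division ring `D`: the units `bar a` (`a ∈ A`) form a
`D`-basis of `R` (`D` acting via the embedding `ι`), with `bar a₁ * bar a₂ =
τ(a₁,a₂)·bar (a₁a₂)` and `bar a * d = σ_a(d) * bar a`. -/
structure IsCrossedProduct (D : Type u) [DivisionRing D] {n : ℕ} (R : Type v) [Ring R]
    (ι : D →+* R) (bar : (Fin n → ℤ) → Rˣ) (σ : (Fin n → ℤ) → D ≃+* D)
    (τ : (Fin n → ℤ) → (Fin n → ℤ) → D) : Prop where
  τ_ne_zero : ∀ a b, τ a b ≠ 0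
  mul_bar : ∀ a b, (bar a : R) * bar b = ι (τ a b) * bar (a + b)
  bar_comm : ∀ a d, (bar a : R) * ι d = ι (σ a d) * bar a
  repr_unique : ∀ r : R, ∃! c : (Fin n → ℤ) →₀ D, r = c.sum fun a d => ι d * (bar a : R)

/-- The set of `D`-linear combinations of `{bar b : b ∈ B}` in `R`; for a subgroup
`B ≤ A` this is the sub-crossed-product `D∗B` of `D∗A`. -/
def cpSpan {D : Type u} [DivisionRing D] {n : ℕ} {R : Type v} [Ring R] (ι : D →+* R)
    (bar : (Fin n → ℤ) → Rˣ) (B : AddSubgroup (Fin n → ℤ)) : Set R :=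
  { r | ∃ c : (Fin n → ℤ) →₀ D, (∀ a ∈ c.support, a ∈ B) ∧
      r = c.sum fun a d => ι d * (bar a : R) }

/-- A right `D∗A`-module `M` is `D∗B`-torsion if every element of `M` is annihilated by a
nonzero element of `D∗B`. -/
def IsCPTorsionOver {D : Type u} [DivisionRing D] {n : ℕ} {R : Type v} [Ring R]
    (ι : D →+* R) (bar : (Fin n → ℤ) → Rˣ) (B : AddSubgroup (Fin n → ℤ)) (M : Type*)
    [AddCommGroup M] [Module Rᵐᵒᵖ M] : Prop :=
  ∀ m : M, ∃ β ∈ cpSpan ι bar B, β ≠ 0 ∧ op β • m = 0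

noncomputable def rk' {n : ℕ} (B : AddSubgroup (Fin n → ℤ)) : ℕ := Module.finrank ℤ B

/-- The Gelfand–Kirillov dimension (measured over `D`) of a finitely generated right module
over the crossed product `D∗A`, via the Brookes–Groves characterization: the supremum of
the ranks of subgroups `B ≤ A` such that `M` is not `D∗B`-torsion. -/
noncomputable def gkCP {D : Type u} [DivisionRing D] {n : ℕ} {R : Type v} [Ring R]
    (ι : D →+* R) (bar : (Fin n → ℤ) → Rˣ) (M : Type*) [AddCommGroup M]
    [Module Rᵐᵒᵖ M] : ℕ :=
  sSup { r : ℕ | ∃ B : AddSubgroup (Fin n → ℤ), ¬ IsCPTorsionOver ι bar B M ∧ rk' B = r }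

/-- The GK dimension of `M` regarded as a module over the sub-crossed-product `D∗A'`,
via the Brookes–Groves characterization: the supremum of the ranks of subgroups `B ≤ A'`
such that `M` is not `D∗B`-torsion. -/
noncomputable def gkCPrel {D : Type u} [DivisionRing D] {n : ℕ} {R : Type v} [Ring R]
    (ι : D →+* R) (bar : (Fin n → ℤ) → Rˣ) (A' : AddSubgroup (Fin n → ℤ))
    (M : Type*) [AddCommGroup M] [Module Rᵐᵒᵖ M] : ℕ :=
  sSup { r : ℕ | ∃ B : AddSubgroup (Fin n → ℤ), B ≤ A' ∧
    ¬ IsCPTorsionOver ι bar B M ∧ rk' B = r }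


lemma cpTorsion_mono {D : Type u} [DivisionRing D] {n : ℕ} {R : Type v} [Ring R]
    (ι : D →+* R) (bar : (Fin n → ℤ) → Rˣ) {B B' : AddSubgroup (Fin n → ℤ)}
    (hBB' : B ≤ B') (M : Type*) [AddCommGroup M] [Module Rᵐᵒᵖ M]
    (h : IsCPTorsionOver ι bar B M) : IsCPTorsionOver ι bar B' M := by
  intro m
  obtain ⟨β, ⟨c, hc, hβ⟩, hne, hm⟩ := h m
  exact ⟨β, ⟨c, fun a ha => hBB' (hc a ha), hβ⟩, hne, hm⟩

lemma rk'_inf_eq {n : ℕ} (B A' : AddSubgroup (Fin n → ℤ)) (hA' : A'.index ≠ 0) :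
    rk' (B ⊓ A') = rk' B := by
  classical
  set m : ℕ := A'.index with hm
  have hmz : (m : ℤ) ≠ 0 := Int.natCast_ne_zero.mpr hA'
  set f : (Fin n → ℤ) →ₗ[ℤ] (Fin n → ℤ) := (m : ℤ) • LinearMap.id with hf
  have hinj : Function.Injective f := by
    intro x y hxy
    have : (m : ℤ) • x = (m : ℤ) • y := hxy
    exact smul_right_injective _ hmz this
  set S : Submodule ℤ (Fin n → ℤ) := AddSubgroup.toIntSubmodule B with hS
  set T : Submodule ℤ (Fin n → ℤ) := AddSubgroup.toIntSubmodule (B ⊓ A') with hT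
  have hTS : T ≤ S := fun x hx => hx.1
  have hmapT : Submodule.map f S ≤ T := by
    rintro x ⟨y, hy, rfl⟩
    have hfy : f y = m • y := by
      show (m : ℤ) • y = m • y
      exact natCast_zsmul y m
    rw [hfy]
    exact ⟨AddSubgroup.nsmul_mem B hy m, AddSubgroup.nsmul_index_mem A' y⟩
  have h1 : Module.finrank ℤ S = Module.finrank ℤ (Submodule.map f S) :=
    (Submodule.equivMapOfInjective f hinj S).finrank_eq
  have h2 : Module.finrank ℤ (Submodule.map f S) ≤ Module.finrank ℤ T :=
    Submodule.finrank_mono hmapT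
  have h3 : Module.finrank ℤ T ≤ Module.finrank ℤ S := Submodule.finrank_mono hTS
  have : Module.finrank ℤ T = Module.finrank ℤ S := le_antisymm h3 (h1 ▸ h2)
  exact this

/-- **Proposition.** The GK dimension of a finitely generated module over a crossed
product `D∗A` does not change in passing to a subgroup `A' ≤ A` of finite index: if
`gk(M) = r` (`0 ≤ r ≤ rk A`) and `M'` denotes `M` regarded as a `D∗A'`-module, then
`gk(M') = r`. -/
theorem gk_eq_of_finiteIndex {D : Type u} [DivisionRing D] {n : ℕ} {R : Type u} [Ring R]
    {ι : D →+* R} {bar : (Fin n → ℤ) → Rˣ} {σ : (Fin n → ℤ) → D ≃+* D}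
    {τ : (Fin n → ℤ) → (Fin n → ℤ) → D}
    (h : IsCrossedProduct D R ι bar σ τ)
    (M : Type u) [AddCommGroup M] [Module Rᵐᵒᵖ M] [Module.Finite Rᵐᵒᵖ M]
    (r : ℕ) (hr : gkCP ι bar M = r) (hrn : r ≤ n)
    (A' : AddSubgroup (Fin n → ℤ)) (hA' : A'.index ≠ 0) :
    gkCPrel ι bar A' M = r := by
  rw [← hr]
  unfold gkCP gkCPrel
  congr 1
  ext k
  constructor
  · rintro ⟨B, _, hT, hk⟩
    exact ⟨B, hT, hk⟩
  · rintro ⟨B, hT, hk⟩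
    refine ⟨B ⊓ A', inf_le_right, fun hT' => hT ?_, ?_⟩
    · exact cpTorsion_mono ι bar inf_le_left M hT'
    · rw [rk'_inf_eq B A' hA', hk]
end

section
/- Let M be a nonzero finitely generated right module over a crossed product D∗A of a finitely generated free abelian group A over a division ring D, with gk(M) ≥ 1. Let C < A be an infinite cyclic subgroup such that M is D∗C-torsion, and let V be a carrier space of Δ*(M), so that V = ker(res_{B_V}) for an isolated subgroup B_V ≤ A. Then B_V ∩ C ≠ ⟨1⟩. -/
open MulOpposite

universe u v

section BrookesGroves

variable {D : Type u} [DivisionRing D] {n : ℕ} {R : Type u} [Ring R]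

/-- The pairing between a character `φ ∈ A* = Hom_ℤ(A, ℝ) ≅ ℝⁿ` and a group element
`a ∈ A = ℤⁿ`. -/
def charPair {n : ℕ} (φ : EuclideanSpace ℝ (Fin n)) (a : Fin n → ℤ) : ℝ :=
  ∑ i, φ i * (a i : ℝ)

/-- The `D`-span in `D∗A` of the `bar a` for `a` in an arbitrary subset `T ⊆ A`; applied
below to the submonoid `A(0,φ)` and the subsemigroup `A(+,φ)`. -/
def cpSpanSet {D : Type u} [DivisionRing D] {n : ℕ} {R : Type u} [Ring R] (ι : D →+* R)
    (bar : (Fin n → ℤ) → Rˣ) (T : Set (Fin n → ℤ)) : Set R :=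
  { r | ∃ c : (Fin n → ℤ) →₀ D, (∀ a ∈ c.support, a ∈ T) ∧
      r = c.sum fun a d => ι d * (bar a : R) }

/-- `X·(D∗A(0,φ))` (for `cmp = (· ≤ ·)`), resp. `X·(D∗A(+,φ))` (for `cmp = (· < ·)`):
the additive subgroup of `M` of finite sums `Σ (op βᵢ) • xᵢ` with `xᵢ ∈ X` and
`βᵢ ∈ D∗A(0,φ)` resp. `D∗A(+,φ)`. -/
def trailingSub (ι : D →+* R) (bar : (Fin n → ℤ) → Rˣ) (M : Type u) [AddCommGroup M]
    [Module Rᵐᵒᵖ M] (X : Finset M) (T : Set (Fin n → ℤ)) : AddSubgroup M :=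
  AddSubgroup.closure { m : M | ∃ x ∈ X, ∃ β ∈ cpSpanSet ι bar T, m = op β • x }

/-- `Δ(M)`: the set of characters `φ ∈ A* ≅ ℝⁿ` whose trailing coefficient module
`TC_φ(M) = X·(D∗A(0,φ)) / X·(D∗A(+,φ))` is nonzero (`X` a finite generating set of `M`;
the set is independent of this choice). -/
def DeltaSet (ι : D →+* R) (bar : (Fin n → ℤ) → Rˣ) (M : Type u) [AddCommGroup M]
    [Module Rᵐᵒᵖ M] (X : Finset M) : Set (EuclideanSpace ℝ (Fin n)) :=
  { φ | trailingSub ι bar M X { a | 0 ≤ charPair φ a }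
      ≠ trailingSub ι bar M X { a | 0 < charPair φ a } }

/-- A neighborhood of `x` in `S ⊆ ℝⁿ` is an `m`-ball: the intersection of some ball
centered at `x` with `S` equals its intersection with an `m`-dimensional subspace. -/
def NbhdIsBall {n : ℕ} (S : Set (EuclideanSpace ℝ (Fin n)))
    (x : EuclideanSpace ℝ (Fin n)) (m : ℕ) : Prop :=
  ∃ ε > (0:ℝ), ∃ W : Submodule ℝ (EuclideanSpace ℝ (Fin n)), Module.finrank ℝ W = m ∧
    S ∩ Metric.ball x ε = ↑W ∩ Metric.ball x ε

/-- `x` is a regular point of `S`: some neighborhood of `x` in `S` is an `m`-ball and `S`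
has no points with this property for larger `m`. -/
def IsRegularPt {n : ℕ} (S : Set (EuclideanSpace ℝ (Fin n)))
    (x : EuclideanSpace ℝ (Fin n)) : Prop :=
  x ∈ S ∧ ∃ m : ℕ, NbhdIsBall S x m ∧ ∀ y ∈ S, ∀ m', NbhdIsBall S y m' → m' ≤ m

/-- The essential part `S*` of `S`: the closure of the set of regular points of `S`. -/
def essentialPart {n : ℕ} (S : Set (EuclideanSpace ℝ (Fin n))) :
    Set (EuclideanSpace ℝ (Fin n)) :=
  closure { x | IsRegularPt S x }

/-- `V` is a carrier space of `S`: the vector span of a (small) neighborhood of a regular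
point of `S`. -/
def IsCarrierSpace {n : ℕ} (S : Set (EuclideanSpace ℝ (Fin n)))
    (V : Submodule ℝ (EuclideanSpace ℝ (Fin n))) : Prop :=
  ∃ x, IsRegularPt S x ∧ ∃ ε > (0:ℝ), V = Submodule.span ℝ (S ∩ Metric.ball x ε)

/-! If `φ(c) ≠ 0` then `φ` is injective on `C`, so every nonzero `β ∈ D∗C` has a unique
`φ`-trailing term, which is a unit of `D∗A`. If `x·β = 0`, this writes `x` as `x·γ` with
`γ ∈ D∗A(+,φ)`, whence `TC_φ(M) = 0`. So `Δ(M)`, its essential part and every carrier space `V`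
lie in the closed hyperplane `{φ | φ(c) = 0}`. Since `V` is the annihilator of `B_V`, duality
for the finitely generated abelian group `A / B_V` puts a nonzero multiple of `c` into `B_V`. -/

theorem Submodule.exists_dual_ne_zero_le_ker_of_forall_smul_notMem {R M : Type*} [CommRing R]
    [IsDomain R] [IsPrincipalIdealRing R] [AddCommGroup M] [Module R M] [Module.Finite R M]
    (N : Submodule R M) {x : M} (hx : ∀ r : R, r ≠ 0 → r • x ∉ N) :
    ∃ f : Module.Dual R M, f x ≠ 0 ∧ N ≤ LinearMap.ker f := by
  -- `(M ⧸ N) ⧸ torsion` is free, and `x` survives in it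
  let π := (Submodule.torsion R (M ⧸ N)).mkQ ∘ₗ N.mkQ
  have hπx : π x ≠ 0 := by
    intro hx0
    obtain ⟨⟨r, hr⟩, hrx⟩ := (Submodule.mem_torsion_iff _).1
      ((Submodule.Quotient.mk_eq_zero _).1 hx0)
    exact hx r (nonZeroDivisors.ne_zero hr)
      ((Submodule.Quotient.mk_eq_zero N).1 (by simpa [← Submodule.Quotient.mk_smul] using hrx))
  obtain ⟨g, hg⟩ := Module.Projective.exists_dual_ne_zero R hπx
  refine ⟨g ∘ₗ π, hg, fun y hy => ?_⟩
  simp [π, (Submodule.Quotient.mk_eq_zero N).2 hy]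

lemma charPair_add (φ : EuclideanSpace ℝ (Fin n)) (a b : Fin n → ℤ) :
    charPair φ (a + b) = charPair φ a + charPair φ b := by
  simp only [charPair, Pi.add_apply, Int.cast_add, mul_add, Finset.sum_add_distrib]

lemma charPair_neg (φ : EuclideanSpace ℝ (Fin n)) (a : Fin n → ℤ) :
    charPair φ (-a) = -charPair φ a := by
  simp [charPair]

lemma charPair_zsmul (φ : EuclideanSpace ℝ (Fin n)) (k : ℤ) (a : Fin n → ℤ) :
    charPair φ (k • a) = k * charPair φ a := by
  simp [charPair, Finset.mul_sum, mul_left_comm]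

lemma charPair_toLp_dual (f : Module.Dual ℤ (Fin n → ℤ)) (a : Fin n → ℤ) :
    charPair (WithLp.toLp 2 fun i => (f (Pi.single i 1) : ℝ)) a = f a := by
  have hf : f a = ∑ i, a i * f (Pi.single i 1) := by
    conv_lhs => rw [← Finset.univ_sum_single a]
    refine (map_sum f _ _).trans (Finset.sum_congr rfl fun i _ => ?_)
    rw [← smul_eq_mul, ← map_zsmul, ← Pi.single_smul', smul_eq_mul, mul_one]
  simp [charPair, hf, mul_comm]

def charPairLinearMap (a : Fin n → ℤ) : EuclideanSpace ℝ (Fin n) →ₗ[ℝ] ℝ where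
  toFun φ := charPair φ a
  map_add' φ ψ := by simp [charPair, add_mul, Finset.sum_add_distrib]
  map_smul' r φ := by simp [charPair, Finset.mul_sum, mul_assoc]

lemma isClosed_ker_charPairLinearMap (a : Fin n → ℤ) :
    IsClosed (LinearMap.ker (charPairLinearMap a) : Set (EuclideanSpace ℝ (Fin n))) :=
  isClosed_eq (LinearMap.continuous_of_finiteDimensional _) continuous_const

lemma injOn_charPair_closure_singleton {φ : EuclideanSpace ℝ (Fin n)} {c : Fin n → ℤ}
    (hφc : charPair φ c ≠ 0) : Set.InjOn (charPair φ) (AddSubgroup.closure {c}) := by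
  rintro _ ha _ hb hab
  obtain ⟨k, rfl⟩ := AddSubgroup.mem_closure_singleton.1 ha
  obtain ⟨l, rfl⟩ := AddSubgroup.mem_closure_singleton.1 hb
  rw [charPair_zsmul, charPair_zsmul] at hab
  rw [(by exact_mod_cast mul_right_cancel₀ hφc hab : k = l)]

theorem exists_zsmul_mem_of_forall_charPair_eq_zero {B : AddSubgroup (Fin n → ℤ)}
    {c : Fin n → ℤ}
    (hc : ∀ φ : EuclideanSpace ℝ (Fin n), (∀ b ∈ B, charPair φ b = 0) → charPair φ c = 0) :
    ∃ k : ℤ, k ≠ 0 ∧ k • c ∈ B := by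
  by_contra! hB
  obtain ⟨f, hfc, hfB⟩ :=
    B.toIntSubmodule.exists_dual_ne_zero_le_ker_of_forall_smul_notMem hB
  have hφB : ∀ b ∈ B, charPair (WithLp.toLp 2 fun i => (f (Pi.single i 1) : ℝ)) b = 0 :=
    fun b hb => by rw [charPair_toLp_dual, hfB hb, Int.cast_zero]
  have := hc _ hφB
  rw [charPair_toLp_dual, Int.cast_eq_zero] at this
  exact hfc this

lemma IsCarrierSpace.le_of_subset {S : Set (EuclideanSpace ℝ (Fin n))}
    {V W : Submodule ℝ (EuclideanSpace ℝ (Fin n))}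
    (hW : IsClosed (W : Set (EuclideanSpace ℝ (Fin n))))
    (hSW : S ⊆ W) (hV : IsCarrierSpace (essentialPart S) V) : V ≤ W := by
  obtain ⟨x, -, ε, -, rfl⟩ := hV
  have hess : essentialPart S ⊆ W := closure_minimal (fun y hy => hSW hy.1) hW
  exact Submodule.span_le.2 fun y hy => hess hy.1

section CrossedProduct

open scoped Pointwise

variable {ι : D →+* R} {bar : (Fin n → ℤ) → Rˣ} {σ : (Fin n → ℤ) → D ≃+* D}
  {τ : (Fin n → ℤ) → (Fin n → ℤ) → D}

variable (ι bar) in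
noncomputable def cpSpanAddSubgroup (T : Set (Fin n → ℤ)) : AddSubgroup R :=
  ((Finsupp.supported D D T).toAddSubgroup.map
      (Finsupp.liftAddHom fun a => (AddMonoidHom.mulRight (bar a : R)).comp ι.toAddMonoidHom)).copy
    (cpSpanSet ι bar T) (by
      ext r
      simp [cpSpanSet, Finsupp.mem_supported, Finsupp.liftAddHom_apply, Set.subset_def,
        Function.comp_def, eq_comm])

lemma cpSpanSet_mono {T T' : Set (Fin n → ℤ)} (hT : T ⊆ T') :
    cpSpanSet ι bar T ⊆ cpSpanSet ι bar T' := by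
  rintro r ⟨c, hc, rfl⟩
  exact ⟨c, fun a ha => hT (hc a ha), rfl⟩

lemma single_mem_cpSpanSet {T : Set (Fin n → ℤ)} (d : D) {a : Fin n → ℤ} (ha : a ∈ T) :
    ι d * (bar a : R) ∈ cpSpanSet ι bar T :=
  ⟨Finsupp.single a d,
    fun b hb => by rwa [Finset.mem_singleton.1 (Finsupp.support_single_subset hb)],
    by rw [Finsupp.sum_single_index (by simp)]⟩

lemma trailingSub_mono {M : Type u} [AddCommGroup M] [Module Rᵐᵒᵖ M] (X : Finset M)
    {T T' : Set (Fin n → ℤ)} (hT : T ⊆ T') :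
    trailingSub ι bar M X T ≤ trailingSub ι bar M X T' :=
  AddSubgroup.closure_mono <| by
    rintro _ ⟨x, hx, β, hβ, rfl⟩
    exact ⟨x, hx, β, cpSpanSet_mono hT hβ, rfl⟩

lemma exists_eq_single_add_of_injOn {φ : EuclideanSpace ℝ (Fin n)} {T : Set (Fin n → ℤ)}
    (hT : Set.InjOn (charPair φ) T) {r : R} (hr : r ∈ cpSpanSet ι bar T) (hr0 : r ≠ 0) :
    ∃ a₀ d, d ≠ 0 ∧ ∃ ρ ∈ cpSpanSet ι bar {a | charPair φ a₀ < charPair φ a},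
      r = ι d * (bar a₀ : R) + ρ := by
  obtain ⟨c, hc, rfl⟩ := hr
  have hsupp : c.support.Nonempty := Finsupp.support_nonempty_iff.2 (by rintro rfl; simp at hr0)
  obtain ⟨a₀, ha₀, hmin⟩ := Finset.exists_min_image c.support (charPair φ) hsupp
  refine ⟨a₀, c a₀, Finsupp.mem_support_iff.1 ha₀, _, ⟨c.erase a₀, fun a ha => ?_, rfl⟩, ?_⟩
  · rw [Finsupp.support_erase, Finset.mem_erase] at ha
    exact (hmin a ha.2).lt_of_ne fun h => ha.1 (hT (hc a ha.2) (hc a₀ ha₀) h.symm)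
  · conv_lhs => rw [← Finsupp.single_add_erase a₀ c]
    rw [Finsupp.sum_add_index' (fun _ => by simp) (fun _ _ _ => by rw [map_add, add_mul]),
      Finsupp.sum_single_index (by simp)]

namespace IsCrossedProduct

variable (h : IsCrossedProduct D R ι bar σ τ)
include h

lemma single_mul_single (d d' : D) (a b : Fin n → ℤ) :
    ι d * (bar a : R) * (ι d' * (bar b : R)) = ι (d * σ a d' * τ a b) * (bar (a + b) : R) := by
  rw [mul_assoc, ← mul_assoc (bar a : R), h.bar_comm, mul_assoc, h.mul_bar]
  simp only [map_mul, mul_assoc]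

lemma coe_bar_zero : (bar 0 : R) = ι (τ 0 0) :=
  (Units.mul_left_inj (bar 0)).1 (by simpa using h.mul_bar 0 0)

lemma exists_single_mul_eq_one {d : D} (hd : d ≠ 0) (a : Fin n → ℤ) :
    ∃ w ∈ cpSpanSet ι bar {-a}, ι d * (bar a : R) * w = 1 := by
  refine ⟨_, single_mem_cpSpanSet ((σ a).symm (d⁻¹ * (τ a (-a) * τ 0 0)⁻¹)) rfl, ?_⟩
  rw [h.single_mul_single, add_neg_cancel, h.coe_bar_zero, ← map_mul, RingEquiv.apply_symm_apply,
    ← mul_assoc, mul_inv_cancel₀ hd, one_mul, mul_assoc,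
    inv_mul_cancel₀ (mul_ne_zero (h.τ_ne_zero _ _) (h.τ_ne_zero _ _)), map_one]

lemma mul_mem_cpSpanSet {T T' : Set (Fin n → ℤ)} {r s : R} (hr : r ∈ cpSpanSet ι bar T)
    (hs : s ∈ cpSpanSet ι bar T') : r * s ∈ cpSpanSet ι bar (T + T') := by
  obtain ⟨cr, hcr, rfl⟩ := hr
  obtain ⟨cs, hcs, rfl⟩ := hs
  rw [Finsupp.sum, Finsupp.sum, Finset.sum_mul_sum]
  refine (cpSpanAddSubgroup ι bar _).sum_mem fun a ha =>
    (cpSpanAddSubgroup ι bar _).sum_mem fun b hb => ?_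
  rw [h.single_mul_single]
  exact single_mem_cpSpanSet _ (Set.add_mem_add (hcr a ha) (hcs b hb))

/-- Multiplying the relation `x·β = 0` on the right by an inverse of the trailing term of `β`
writes `x` as `x·γ` with `γ ∈ D∗A(+,φ)`. -/
lemma exists_eq_op_smul_of_op_smul_eq_zero {M : Type*} [AddCommGroup M] [Module Rᵐᵒᵖ M]
    {φ : EuclideanSpace ℝ (Fin n)} {T : Set (Fin n → ℤ)} (hT : Set.InjOn (charPair φ) T)
    {β : R} (hβ : β ∈ cpSpanSet ι bar T) (hβ0 : β ≠ 0) {x : M} (hx : op β • x = 0) :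
    ∃ γ ∈ cpSpanSet ι bar {a | 0 < charPair φ a}, x = op γ • x := by
  obtain ⟨a₀, d, hd, ρ, hρ, rfl⟩ := exists_eq_single_add_of_injOn hT hβ hβ0
  obtain ⟨w, hw, he⟩ := h.exists_single_mul_eq_one hd a₀
  refine ⟨-(ρ * w), (cpSpanAddSubgroup ι bar _).neg_mem
    (cpSpanSet_mono ?_ (h.mul_mem_cpSpanSet hρ hw)), ?_⟩
  · rintro _ ⟨a, ha, _, rfl, rfl⟩
    simp only [Set.mem_ofPred_eq, charPair_add, charPair_neg] at ha ⊢
    linarith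
  · have hx' : op (ι d * (bar a₀ : R)) • x = -(op ρ • x) :=
      eq_neg_of_add_eq_zero_left (by rwa [← add_smul, ← op_add])
    calc x = op (ι d * (bar a₀ : R) * w) • x := by rw [he, op_one, one_smul]
      _ = op (-(ρ * w)) • x := by
        rw [op_mul, mul_smul, hx', smul_neg, op_neg, neg_smul, op_mul, mul_smul]

theorem notMem_deltaSet {M : Type u} [AddCommGroup M] [Module Rᵐᵒᵖ M]
    {B : AddSubgroup (Fin n → ℤ)} (htor : IsCPTorsionOver ι bar B M) (X : Finset M)
    {φ : EuclideanSpace ℝ (Fin n)} (hφ : Set.InjOn (charPair φ) B) :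
    φ ∉ DeltaSet ι bar M X := by
  refine not_not.2 (le_antisymm ?_ (trailingSub_mono X fun a (ha : 0 < charPair φ a) => ha.le))
  rw [trailingSub, AddSubgroup.closure_le]
  rintro _ ⟨x, hx, β, hβ, rfl⟩
  obtain ⟨β', hβ', hβ'0, hann⟩ := htor x
  obtain ⟨γ, hγ, hxγ⟩ := h.exists_eq_op_smul_of_op_smul_eq_zero hφ hβ' hβ'0 hann
  refine AddSubgroup.subset_closure
    ⟨x, hx, γ * β, cpSpanSet_mono ?_ (h.mul_mem_cpSpanSet hγ hβ), ?_⟩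
  · rintro _ ⟨a, ha, b, hb, rfl⟩
    simp only [Set.mem_ofPred_eq, charPair_add] at ha hb ⊢
    linarith
  · conv_lhs => rw [hxγ]
    rw [op_mul, mul_smul]

end IsCrossedProduct

end CrossedProduct

theorem carrierSpace_subgroup_meets_cyclic_general
    {ι : D →+* R} {bar : (Fin n → ℤ) → Rˣ} {σ : (Fin n → ℤ) → D ≃+* D}
    {τ : (Fin n → ℤ) → (Fin n → ℤ) → D}
    (h : IsCrossedProduct D R ι bar σ τ)
    (M : Type u) [AddCommGroup M] [Module Rᵐᵒᵖ M]
    (c : Fin n → ℤ) (hc : c ≠ 0) (C : AddSubgroup (Fin n → ℤ))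
    (hC : C = AddSubgroup.closure {c})
    (htor : IsCPTorsionOver ι bar C M)
    (X : Finset M)
    (V : Submodule ℝ (EuclideanSpace ℝ (Fin n)))
    (hV : IsCarrierSpace (essentialPart (DeltaSet ι bar M X)) V)
    (B_V : AddSubgroup (Fin n → ℤ))
    (hBV : (V : Set (EuclideanSpace ℝ (Fin n))) = { φ | ∀ b ∈ B_V, charPair φ b = 0 }) :
    B_V ⊓ C ≠ ⊥ := by
  subst hC
  have hΔ : DeltaSet ι bar M X ⊆ LinearMap.ker (charPairLinearMap c) := fun φ hφ => by
    by_contra hφc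
    exact h.notMem_deltaSet htor X (injOn_charPair_closure_singleton hφc) hφ
  have hVc := hV.le_of_subset (isClosed_ker_charPairLinearMap c) hΔ
  obtain ⟨k, hk, hkc⟩ := exists_zsmul_mem_of_forall_charPair_eq_zero (B := B_V) (c := c)
    fun φ hφ => hVc (show φ ∈ (V : Set _) from hBV ▸ hφ)
  intro hbot
  have hmem : k • c ∈ B_V ⊓ AddSubgroup.closure {c} :=
    ⟨hkc, AddSubgroup.zsmul_mem _ (AddSubgroup.mem_closure_singleton_self c) k⟩
  rw [hbot, AddSubgroup.mem_bot, smul_eq_zero] at hmem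
  exact hmem.elim hk hc

/-- **Lemma.** Let `M` be a nonzero finitely generated right `D∗A`-module with
`gk(M) ≥ 1`, let `C < A` be an infinite cyclic subgroup such that `M` is `D∗C`-torsion,
and let `V` be a carrier space of `Δ*(M)`, say `V = ker(res_{B_V})` for an isolated
subgroup `B_V ≤ A`.  Then `B_V ∩ C ≠ ⟨1⟩`. -/
theorem carrierSpace_subgroup_meets_cyclic
    {ι : D →+* R} {bar : (Fin n → ℤ) → Rˣ} {σ : (Fin n → ℤ) → D ≃+* D}
    {τ : (Fin n → ℤ) → (Fin n → ℤ) → D}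
    (h : IsCrossedProduct D R ι bar σ τ)
    (M : Type u) [AddCommGroup M] [Module Rᵐᵒᵖ M] [Nontrivial M] [Module.Finite Rᵐᵒᵖ M]
    (hgk : 1 ≤ gkCP ι bar M)
    (c : Fin n → ℤ) (hc : c ≠ 0) (C : AddSubgroup (Fin n → ℤ))
    (hC : C = AddSubgroup.closure {c})
    (htor : IsCPTorsionOver ι bar C M)
    (X : Finset M) (hX : Submodule.span Rᵐᵒᵖ (X : Set M) = ⊤)
    (V : Submodule ℝ (EuclideanSpace ℝ (Fin n)))
    (hV : IsCarrierSpace (essentialPart (DeltaSet ι bar M X)) V)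
    (B_V : AddSubgroup (Fin n → ℤ))
    (hisolated : ∀ (a : Fin n → ℤ) (k : ℤ), k ≠ 0 → k • a ∈ B_V → a ∈ B_V)
    (hBV : (V : Set (EuclideanSpace ℝ (Fin n))) = { φ | ∀ b ∈ B_V, charPair φ b = 0 }) :
    B_V ⊓ C ≠ ⊥ :=
  carrierSpace_subgroup_meets_cyclic_general h M c hc C hC htor X V hV B_V hBV

end BrookesGroves
end
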